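/- arXiv:1705.08791 — 2 statements merged into one kernel-verified Lean document; each statement's English description precedes it below -/
import Mathlib

section
/- Let S(t) be a complex polynomial of degree m and suppose Q(t) is a polynomial solution of degree m+2 of the ODE (t·Q'' + Q')·Q − t·(Q')² = S·Q. Then the reversed polynomial Q̃(t) = t^{m+2}·Q(1/t) solves the same ODE with data the reversed polynomial S̃(t) = t^m·S(1/t). -/
/-!
Multiplied by `t`, the ODE reads `θ²Q · Q − (θQ)² = t·S·Q` for the Euler operator `θ = t·d/dt`.
Reversal in degree `N` intertwines `θ` with `N − θ`, and the quadratic expression on the left is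
invariant under `θ ↦ N − θ`. Reversing the whole identity in degree `2(m + 2)` therefore turns it
into the same identity for `Q̃` and `S̃`.
-/

open Polynomial

/-- A polynomial `Q` solves the ODE
`(t·Q''(t) + Q'(t))·Q(t) − t·(Q'(t))² = S(t)·Q(t)` for the data `S`. -/
def SolvesODEPoly (S Q : Polynomial ℂ) : Prop :=
  (X * derivative (derivative Q) + derivative Q) * Q - X * (derivative Q) ^ 2 = S * Q

namespace Polynomial

variable {R : Type*}

noncomputable def eulerOp [CommSemiring R] : R[X] →ₗ[R] R[X] :=
  LinearMap.mulLeft R X ∘ₗ derivative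

section CommSemiring

variable [CommSemiring R]

theorem eulerOp_apply (P : R[X]) : eulerOp P = X * derivative P := rfl

theorem coeff_eulerOp (P : R[X]) (k : ℕ) : (eulerOp P).coeff k = k * P.coeff k := by
  cases k with
  | zero => simp [eulerOp_apply]
  | succ k => simp [eulerOp_apply, coeff_derivative, mul_comm]

theorem natDegree_eulerOp_le (P : R[X]) : (eulerOp P).natDegree ≤ P.natDegree :=
  natDegree_le_iff_coeff_eq_zero.mpr fun k hk => by
    rw [coeff_eulerOp, coeff_eq_zero_of_natDegree_lt hk, mul_zero]

theorem eulerOp_reflect_add_reflect_eulerOp {N : ℕ} {P : R[X]} (h : P.natDegree ≤ N) :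
    eulerOp (reflect N P) + reflect N (eulerOp P) = N • reflect N P := by
  ext k
  simp only [coeff_add, coeff_natCast_mul, coeff_eulerOp, coeff_reflect, nsmul_eq_mul]
  rcases le_or_gt k N with hk | hk
  · rw [revAt_le hk, ← add_mul, ← Nat.cast_add, Nat.add_sub_cancel' hk]
  · rw [revAt_eq_self_of_lt hk, coeff_eq_zero_of_natDegree_lt (h.trans_lt hk)]
    simp

theorem reflect_X_mul_mul {m N : ℕ} {S Q : R[X]} (hS : S.natDegree ≤ m) (hQ : Q.natDegree ≤ N) :
    reflect (2 + (m + N)) (X * (S * Q)) = X * (reflect m S * reflect N Q) := by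
  have hX : reflect 2 (X : R[X]) = X := by
    simpa [revAt_le] using reflect_monomial (R := R) 2 1
  rw [reflect_mul _ _ (natDegree_X_le.trans one_le_two) (natDegree_mul_le.trans (add_le_add hS hQ)),
    reflect_mul _ _ hS hQ, hX]

end CommSemiring

theorem eulerOp_reflect [CommRing R] {N : ℕ} {P : R[X]} (h : P.natDegree ≤ N) :
    eulerOp (reflect N P) = N • reflect N P - reflect N (eulerOp P) :=
  eq_sub_of_add_eq (eulerOp_reflect_add_reflect_eulerOp h)

-- Writing `P̃ = reflect N P`, we have `θP̃ = N • P̃ − reflect N (θP)`, and every term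
-- containing `N` cancels.
theorem reflect_eulerOp_eulerOp_mul_sub_sq [CommRing R] {N : ℕ} {P : R[X]}
    (h : P.natDegree ≤ N) :
    reflect (N + N) (eulerOp (eulerOp P) * P - eulerOp P ^ 2) =
      eulerOp (eulerOp (reflect N P)) * reflect N P - eulerOp (reflect N P) ^ 2 := by
  have hθP : (eulerOp P).natDegree ≤ N := (natDegree_eulerOp_le P).trans h
  have hθθP : (eulerOp (eulerOp P)).natDegree ≤ N := (natDegree_eulerOp_le _).trans hθP
  rw [reflect_sub, sq, sq, reflect_mul _ _ hθθP h, reflect_mul _ _ hθP hθP, eulerOp_reflect h,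
    map_sub, map_nsmul, eulerOp_reflect h, eulerOp_reflect hθP]
  ring

end Polynomial

theorem solvesODEPoly_iff_eulerOp {S Q : ℂ[X]} :
    SolvesODEPoly S Q ↔ eulerOp (eulerOp Q) * Q - eulerOp Q ^ 2 = X * (S * Q) := by
  have h : eulerOp (eulerOp Q) * Q - eulerOp Q ^ 2 =
      X * ((X * derivative (derivative Q) + derivative Q) * Q - X * derivative Q ^ 2) := by
    simp only [eulerOp_apply, derivative_mul, derivative_X]
    ring
  rw [SolvesODEPoly, h, mul_right_inj' X_ne_zero]

/-- Let `S` be a complex polynomial of degree `m` and suppose `Q` is a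
polynomial solution of degree `m+2` of the ODE with data `S`. Then the reversed polynomial
`Q̃(t) = t^{m+2}·Q(1/t)` solves the ODE with data `S̃(t) = t^m·S(1/t)`. -/
theorem stmt12 (S Q : Polynomial ℂ) (m : ℕ) (hS : S.degree = m) (hQ : Q.degree = (m + 2 : ℕ))
    (hode : SolvesODEPoly S Q) :
    SolvesODEPoly S.reverse Q.reverse := by
  have hSn : S.natDegree = m := natDegree_eq_of_degree_eq_some hS
  have hQn : Q.natDegree = m + 2 := natDegree_eq_of_degree_eq_some hQ
  rw [solvesODEPoly_iff_eulerOp] at hode ⊢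
  rw [reverse, reverse, hSn, hQn, ← reflect_eulerOp_eulerOp_mul_sub_sq hQn.le, hode,
    show m + 2 + (m + 2) = 2 + (m + (m + 2)) by ring, reflect_X_mul_mul hSn.le hQn.le]
end

section
/- Let σ ∈ P_m[x,y] with total degree 2m−2. If u ∈ P_{m+2}[x,y] solves the PDE u·u_{xy} − u_x·u_y = σ·u, then ũ(x,y) = (xy)^{m+2}·u(1/x,1/y) solves the PDE with data σ̃(x,y) = (xy)^m·σ(1/x,1/y). -/
/-!
With the Euler operators `θᵢ = xᵢ ∂ᵢ`, multiplying the PDE by `xy` turns it into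
`u θ₀θ₁u − θ₀u θ₁u = xy σ u`. The reflection `p ↦ (xy)^N p(1/x, 1/y)` is multiplicative on
polynomials of degree at most `N` in each variable and conjugates `θᵢ` to `N − θᵢ`; the constants
cancel in `u θ₀θ₁u − θ₀u θ₁u`, so its reflection with bound `2(m + 2)` is the same expression
in `ũ`. Splitting `2(m + 2) = 2 + m + (m + 2)`, the reflection of `xy σ u` is `xy σ̃ ũ`, since `xy`
is its own reflection with bound `2`.
-/

open MvPolynomial

/-- A bivariate polynomial `u ∈ ℂ[x,y]` solves the PDE
`u·u_{xy} − u_x·u_y = σ·u` for the data `σ`, where `x` is the variable `0` and `y` is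
the variable `1`. -/
def SolvesPDE (σ u : MvPolynomial (Fin 2) ℂ) : Prop :=
  u * pderiv 0 (pderiv 1 u) - pderiv 0 u * pderiv 1 u = σ * u

/-- For `u = Σ_{i,j=0}^{n−1} a_{ij} x^i y^j ∈ P_n[x,y]`, the reversal
`ũ(x,y) = (xy)^n·u(1/x,1/y) = Σ_{i,j=0}^{n−1} a_{ij} x^{n−i} y^{n−j}`. -/
noncomputable def mvRev (n : ℕ) (u : MvPolynomial (Fin 2) ℂ) : MvPolynomial (Fin 2) ℂ :=
  ∑ i ∈ Finset.range n, ∑ j ∈ Finset.range n,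
    monomial (Finsupp.single (0 : Fin 2) (n - i) + Finsupp.single (1 : Fin 2) (n - j))
      (coeff (Finsupp.single (0 : Fin 2) i + Finsupp.single (1 : Fin 2) j) u)

namespace MvPolynomial

variable {ι R : Type*}

section CommSemiring

variable [CommSemiring R]

theorem restrictDegree_mono {N M : ℕ} (h : N ≤ M) :
    restrictDegree ι R N ≤ restrictDegree ι R M :=
  restrictSupport_mono R fun _ hd i => (hd i).trans h

theorem mem_restrictDegree_iff_degreeOf_le {N : ℕ} {p : MvPolynomial ι R} :
    p ∈ restrictDegree ι R N ↔ ∀ i, degreeOf i p ≤ N := by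
  simp only [mem_restrictDegree, degreeOf_le_iff]
  exact ⟨fun h i s hs => h s hs i, fun h s hs i => h i s hs⟩

@[elab_as_elim]
theorem restrictDegree_induction {N : ℕ} {P : MvPolynomial ι R → Prop}
    (monomial : ∀ d c, (∀ i, d i ≤ N) → P (monomial d c))
    (add : ∀ p q, P p → P q → P (p + q)) {p : MvPolynomial ι R}
    (hp : p ∈ restrictDegree ι R N) : P p := by
  classical
  rw [p.as_sum]
  refine Finset.sum_induction _ P add (by simpa using monomial 0 0 (by simp)) fun d hd => ?_
  exact monomial _ _ ((mem_restrictDegree _ _ _).1 hp d hd)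

theorem mul_mem_restrictDegree {N M : ℕ} {p q : MvPolynomial ι R}
    (hp : p ∈ restrictDegree ι R N) (hq : q ∈ restrictDegree ι R M) :
    p * q ∈ restrictDegree ι R (N + M) := by
  classical
  rw [mem_restrictDegree] at *
  intro s hs i
  obtain ⟨a, ha, b, hb, rfl⟩ := Finset.mem_add.1 (support_mul p q hs)
  simpa using add_le_add (hp a ha i) (hq b hb i)

theorem X_mem_restrictDegree (i : ι) : (X i : MvPolynomial ι R) ∈ restrictDegree ι R 1 := by
  classical
  change monomial _ _ ∈ restrictSupport R _
  refine (monomial_mem_restrictSupport R).2 (Or.inl fun j => ?_)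
  rw [Finsupp.single_apply]
  split_ifs <;> simp

section Reflect

variable [Finite ι]

noncomputable def reflectExponent (N : ℕ) (d : ι →₀ ℕ) : ι →₀ ℕ :=
  Finsupp.equivFunOnFinite.symm fun i => N - d i

@[simp]
theorem reflectExponent_apply (N : ℕ) (d : ι →₀ ℕ) (i : ι) : reflectExponent N d i = N - d i :=
  rfl

theorem reflectExponent_add {N M : ℕ} {d e : ι →₀ ℕ} (hd : ∀ i, d i ≤ N) (he : ∀ i, e i ≤ M) :
    reflectExponent N d + reflectExponent M e = reflectExponent (N + M) (d + e) := by
  ext i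
  simp only [Finsupp.add_apply, reflectExponent_apply]
  have := hd i
  have := he i
  omega

/-- `p ↦ (x₁ ⋯ xₖ)^N p(1/x₁, …, 1/xₖ)`. Exponents above `N` are truncated to `0`, so this is the
reflection only on `restrictDegree ι R N`. -/
noncomputable def reflect (N : ℕ) : MvPolynomial ι R →ₗ[R] MvPolynomial ι R :=
  AddMonoidAlgebra.mapDomainLinearMap R R (reflectExponent N)

theorem reflect_monomial (N : ℕ) (d : ι →₀ ℕ) (c : R) :
    reflect N (monomial d c) = monomial (reflectExponent N d) c :=
  AddMonoidAlgebra.mapDomainLinearMap_single _ _ _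

theorem reflect_mul {N M : ℕ} {p q : MvPolynomial ι R}
    (hp : p ∈ restrictDegree ι R N) (hq : q ∈ restrictDegree ι R M) :
    reflect N p * reflect M q = reflect (N + M) (p * q) := by
  refine restrictDegree_induction (fun d c hd => ?_) (fun p p' h h' => ?_) hp
  · refine restrictDegree_induction (fun e c' he => ?_) (fun q q' h h' => ?_) hq
    · simp only [reflect_monomial, monomial_mul, reflectExponent_add hd he]
    · simp only [map_add, mul_add, h, h']
  · simp only [map_add, add_mul, h, h']

end Reflect

noncomputable def euler (i : ι) : MvPolynomial ι R →ₗ[R] MvPolynomial ι R :=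
  LinearMap.mulLeft R (X i) ∘ₗ (pderiv i).toLinearMap

theorem euler_apply (i : ι) (p : MvPolynomial ι R) : euler i p = X i * pderiv i p :=
  rfl

theorem euler_monomial (i : ι) (d : ι →₀ ℕ) (c : R) :
    euler i (monomial d c) = monomial d (c * d i) := by
  classical
  rw [euler_apply, pderiv_monomial]
  rcases Nat.eq_zero_or_pos (d i) with h | h
  · simp [h]
  · rw [X, monomial_mul, one_mul, add_tsub_cancel_of_le]
    exact Finsupp.single_le_iff.2 h

theorem euler_mem_restrictDegree (i : ι) {N : ℕ} {p : MvPolynomial ι R}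
    (hp : p ∈ restrictDegree ι R N) : euler i p ∈ restrictDegree ι R N := by
  refine restrictDegree_induction (fun d c hd => ?_) (fun p q h h' => ?_) hp
  · simp [euler_monomial, restrictDegree, hd]
  · simpa only [map_add] using add_mem h h'

/-- Under `x ↦ 1/x` the Euler operator `θ = x ∂ₓ` changes sign; the factor `x^N` adds `N`. -/
theorem euler_reflect_add_reflect_euler [Finite ι] (i : ι) {N : ℕ} {p : MvPolynomial ι R}
    (hp : p ∈ restrictDegree ι R N) :
    euler i (reflect N p) + reflect N (euler i p) = N • reflect N p := by
  refine restrictDegree_induction (fun d c hd => ?_) (fun p q h h' => ?_) hp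
  · rw [reflect_monomial, euler_monomial, euler_monomial, reflect_monomial, ← map_add,
      ← map_nsmul, ← mul_add, ← Nat.cast_add, reflectExponent_apply, Nat.sub_add_cancel (hd i),
      nsmul_eq_mul, mul_comm]
  · simp only [map_add, nsmul_add, ← h, ← h']
    abel

end CommSemiring

section CommRing

variable [CommRing R]

theorem euler_euler_of_ne {i j : ι} (h : i ≠ j) (p : MvPolynomial ι R) :
    euler i (euler j p) = X i * X j * pderiv i (pderiv j p) := by
  rw [euler_apply, euler_apply, Derivation.leibniz, pderiv_X_of_ne h.symm, smul_zero, add_zero,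
    smul_eq_mul]
  ring

/-- `u θᵢθⱼu − θᵢu θⱼu` for the Euler operators `θᵢ = xᵢ ∂ᵢ`: half the Hirota derivative
`DᵢDⱼ (u · u)` in logarithmic coordinates. -/
noncomputable def hirota (i j : ι) (u : MvPolynomial ι R) : MvPolynomial ι R :=
  u * euler i (euler j u) - euler i u * euler j u

theorem hirota_eq_of_ne {i j : ι} (h : i ≠ j) (u : MvPolynomial ι R) :
    hirota i j u = X i * X j * (u * pderiv i (pderiv j u) - pderiv i u * pderiv j u) := by
  rw [hirota, euler_euler_of_ne h, euler_apply, euler_apply]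
  ring

theorem hirota_reflect [Finite ι] (i j : ι) {N : ℕ} {u : MvPolynomial ι R}
    (hu : u ∈ restrictDegree ι R N) :
    hirota i j (reflect N u) = reflect (N + N) (hirota i j u) := by
  have hj := euler_reflect_add_reflect_euler j hu
  have hi := euler_reflect_add_reflect_euler i hu
  have hij := euler_reflect_add_reflect_euler i (euler_mem_restrictDegree j hu)
  have hij' : euler i (euler j (reflect N u)) + euler i (reflect N (euler j u)) =
      N • euler i (reflect N u) := by
    rw [← map_add, hj, map_nsmul]
  rw [hirota, hirota, map_sub, ← reflect_mul hu (euler_mem_restrictDegree i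
      (euler_mem_restrictDegree j hu)), ← reflect_mul (euler_mem_restrictDegree i hu)
      (euler_mem_restrictDegree j hu)]
  linear_combination reflect N u * hij' - reflect N u * hij - euler i (reflect N u) * hj +
    reflect N (euler j u) * hi

end CommRing

end MvPolynomial

theorem solvesPDE_iff_hirota {σ u : MvPolynomial (Fin 2) ℂ} :
    SolvesPDE σ u ↔ hirota 0 1 u = X 0 * X 1 * (σ * u) := by
  rw [SolvesPDE, hirota_eq_of_ne (by decide),
    mul_right_inj' (mul_ne_zero (X_ne_zero _) (X_ne_zero _))]

theorem reflect_X_mul_X {R : Type*} [CommSemiring R] :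
    reflect 2 (X 0 * X 1 : MvPolynomial (Fin 2) R) = X 0 * X 1 := by
  have h : reflectExponent 2 (Finsupp.single (0 : Fin 2) 1 + Finsupp.single 1 1) =
      Finsupp.single 0 1 + Finsupp.single 1 1 := by
    ext i
    fin_cases i <;> simp
  rw [X, X, monomial_mul, reflect_monomial, h, one_mul]

theorem SolvesPDE.reflect {N : ℕ} {σ u : MvPolynomial (Fin 2) ℂ}
    (hσ : σ ∈ restrictDegree (Fin 2) ℂ N) (hu : u ∈ restrictDegree (Fin 2) ℂ (N + 2))
    (h : SolvesPDE σ u) : SolvesPDE (reflect N σ) (reflect (N + 2) u) := by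
  have hX : (X 0 * X 1 : MvPolynomial (Fin 2) ℂ) ∈ restrictDegree (Fin 2) ℂ 2 :=
    mul_mem_restrictDegree (X_mem_restrictDegree 0) (X_mem_restrictDegree 1)
  rw [solvesPDE_iff_hirota] at h ⊢
  rw [hirota_reflect 0 1 hu, h, show N + 2 + (N + 2) = 2 + (N + (N + 2)) by ring,
    ← reflect_mul hX (mul_mem_restrictDegree hσ hu), ← reflect_mul hσ hu, reflect_X_mul_X]

theorem mvRev_monomial {n : ℕ} {d : Fin 2 →₀ ℕ} (hd : ∀ i, d i < n) (c : ℂ) :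
    mvRev n (monomial d c) = reflect n (monomial d c) := by
  classical
  have key : ∀ i j, d = Finsupp.single 0 i + Finsupp.single 1 j ↔ d 0 = i ∧ d 1 = j := by
    intro i j
    constructor
    · rintro rfl
      simp
    · rintro ⟨rfl, rfl⟩
      ext k
      fin_cases k <;> simp
  have hrefl : reflectExponent n d = Finsupp.single 0 (n - d 0) + Finsupp.single 1 (n - d 1) := by
    ext k
    fin_cases k <;> simp
  simp only [mvRev, coeff_monomial, key, ite_and, apply_ite (monomial _), map_zero,
    Finset.sum_ite_irrel, Finset.sum_const_zero, Finset.sum_ite_eq, Finset.mem_range, hd, if_true,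
    reflect_monomial, hrefl]

theorem mvRev_add (n : ℕ) (p q : MvPolynomial (Fin 2) ℂ) :
    mvRev n (p + q) = mvRev n p + mvRev n q := by
  simp only [mvRev, coeff_add, map_add, Finset.sum_add_distrib]

theorem mvRev_eq_reflect {N n : ℕ} {p : MvPolynomial (Fin 2) ℂ}
    (hp : p ∈ restrictDegree (Fin 2) ℂ n) (hn : n < N) : mvRev N p = reflect N p :=
  restrictDegree_induction (fun d c hd => mvRev_monomial (fun i => (hd i).trans_lt hn) c)
    (fun p q hp hq => by rw [mvRev_add, hp, hq, map_add]) hp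

theorem stmt17_general (m : ℕ) (hm : 1 ≤ m)
    (σ u : MvPolynomial (Fin 2) ℂ)
    (hσx : σ.degreeOf 0 ≤ m - 1) (hσy : σ.degreeOf 1 ≤ m - 1)
    (hux : u.degreeOf 0 ≤ m + 1) (huy : u.degreeOf 1 ≤ m + 1)
    (hode : SolvesPDE σ u) :
    SolvesPDE (mvRev m σ) (mvRev (m + 2) u) := by
  obtain ⟨k, rfl⟩ : ∃ k, m = k + 1 := ⟨m - 1, by omega⟩
  have hσ : σ ∈ restrictDegree (Fin 2) ℂ k := by
    rw [mem_restrictDegree_iff_degreeOf_le]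
    intro i
    fin_cases i <;> simpa
  have hu : u ∈ restrictDegree (Fin 2) ℂ (k + 2) := by
    rw [mem_restrictDegree_iff_degreeOf_le]
    intro i
    fin_cases i <;> simpa
  rw [mvRev_eq_reflect hσ k.lt_succ_self, mvRev_eq_reflect hu (by omega)]
  exact hode.reflect (restrictDegree_mono k.le_succ hσ) (restrictDegree_mono (by omega) hu)

/-- Let `σ ∈ P_m[x,y]` have total degree `2m−2`. If `u ∈ P_{m+2}[x,y]`
solves the PDE for the data `σ`, then `ũ(x,y) = (xy)^{m+2}·u(1/x,1/y)` solves the PDE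
with data `σ̃(x,y) = (xy)^m·σ(1/x,1/y)`. -/
theorem stmt17 (m : ℕ) (hm : 1 ≤ m)
    (σ u : MvPolynomial (Fin 2) ℂ)
    (hσx : σ.degreeOf 0 ≤ m - 1) (hσy : σ.degreeOf 1 ≤ m - 1)
    (hσd : σ.totalDegree = 2 * m - 2)
    (hux : u.degreeOf 0 ≤ m + 1) (huy : u.degreeOf 1 ≤ m + 1)
    (hode : SolvesPDE σ u) :
    SolvesPDE (mvRev m σ) (mvRev (m + 2) u) :=
  stmt17_general m hm σ u hσx hσy hux huy hode
end
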